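/- Let R be a Prüfer domain and M a branched maximal ideal that is not divisorial. Then M is not sharp if and only if no M-primary ideal of R is divisorial, if and only if (R:Q) = R for every M-primary ideal Q. -/

import Mathlib

/-- An ideal is divisorial if `I = (R : (R : I))`, phrased via fractional ideals. -/
def IsDivisorial (R : Type*) [CommRing R] [IsDomain R] (I : Ideal R) : Prop :=
  (1 / (1 / (I : FractionalIdeal (nonZeroDivisors R) (FractionRing R))) :
    FractionalIdeal (nonZeroDivisors R) (FractionRing R))
    = (I : FractionalIdeal (nonZeroDivisors R) (FractionRing R))

/-- An ideal is invertible if it is a unit as a fractional ideal. -/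
def IsInvertibleIdeal (R : Type*) [CommRing R] [IsDomain R] (I : Ideal R) : Prop :=
  IsUnit (I : FractionalIdeal (nonZeroDivisors R) (FractionRing R))

/-- A Prüfer domain: every nonzero finitely generated ideal is invertible. -/
def IsPrufer (R : Type*) [CommRing R] [IsDomain R] : Prop :=
  ∀ I : Ideal R, I ≠ ⊥ → I.FG → IsInvertibleIdeal R I

/-- A prime `P` is sharp if it contains a finitely generated ideal contained
only in the maximal ideals that contain `P`. -/
def IsSharp (R : Type*) [CommRing R] (P : Ideal R) : Prop :=
  ∃ I : Ideal R, I.FG ∧ I ≤ P ∧ ∀ M : Ideal R, M.IsMaximal → I ≤ M → P ≤ M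

/-!
The engine is the invertibility of two-generated ideals: from `(a, b)(a, b)⁻¹ = R` with `b ≠ 0`
one gets `u + v = 1` with `u b ∈ R a` and `v a ∈ R b`. This shows that a prime strictly inside
`M` lies in every `M`-primary ideal, so branchedness of `M` provides `x ∈ M` outside all smaller
primes, and that the conductor `{r | r z ∈ R}` of any `z` in the quotient field is finitely
generated.

If `M` is sharp, witnessed by a finitely generated `I`, then `I + R x` is a finitely generated,
hence invertible, `M`-primary ideal: it is divisorial and `(R : Q) ≠ R`. If `M` is not sharp and
`z ∈ (R : Q) \ R` for an `M`-primary `Q`, the conductor of `z` is finitely generated, proper and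
contains `Q`, so it would witness the sharpness of `M`. Finally `(R : Q) = R` makes `Q`
divisorial only when `Q = R`.
-/

open FractionalIdeal

theorem Ideal.radical_ne_bot_of_ne_radical {R : Type*} [CommSemiring R] {Q : Ideal R}
    (h : Q ≠ Q.radical) : Q.radical ≠ ⊥ := fun h0 =>
  h (h0 ▸ le_bot_iff.mp (h0 ▸ Ideal.le_radical))

theorem Ideal.ne_bot_of_radical_ne_bot {R : Type*} [CommSemiring R] [IsReduced R] {Q : Ideal R}
    (h : Q.radical ≠ ⊥) : Q ≠ ⊥ := by
  rintro rfl
  exact h Ideal.radical_bot_of_isReduced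

theorem isSharp_of_le_radical {R : Type*} [CommRing R] {M J : Ideal R} (hM : M.IsMaximal)
    (hJ : J.FG) (hJtop : J ≠ ⊤) (hMJ : M ≤ J.radical) : IsSharp R M := by
  have hrad : M = J.radical := hM.eq_of_le (mt Ideal.radical_eq_top.mp hJtop) hMJ
  refine ⟨J, hJ, hrad ▸ Ideal.le_radical, fun N hN hJN => ?_⟩
  exact hrad ▸ hN.isPrime.radical ▸ Ideal.radical_mono hJN

section Domain

variable {R : Type*} [CommRing R] [IsDomain R]

local notation "K" => FractionRing R
local notation "𝓕" => FractionalIdeal (nonZeroDivisors R) (FractionRing R)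

theorem IsInvertibleIdeal.isDivisorial {I : Ideal R} (h : IsInvertibleIdeal R I) :
    IsDivisorial R I := by
  have hmul : (I : 𝓕)⁻¹ * I = 1 :=
    mul_comm (I : 𝓕) _ ▸ (mul_inv_cancel_iff_isUnit K).mpr h
  rw [IsDivisorial, ← inv_eq, ← inv_eq]
  exact (right_inverse_eq K _ _ hmul).symm

theorem IsInvertibleIdeal.one_div_ne_one {I : Ideal R} (h : IsInvertibleIdeal R I)
    (hI : I ≠ ⊤) : 1 / (I : 𝓕) ≠ 1 := by
  intro h1
  have hmul : (I : 𝓕) * (I : 𝓕)⁻¹ = 1 := (mul_inv_cancel_iff_isUnit K).mpr h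
  rw [inv_eq, h1, mul_one, coeIdeal_eq_one] at hmul
  exact hI (hmul.trans Ideal.one_eq_top)

theorem not_isDivisorial_of_one_div_eq_one {I : Ideal R} (hI : I ≠ ⊤) (h : 1 / (I : 𝓕) = 1) :
    ¬ IsDivisorial R I := by
  rw [IsDivisorial, h, FractionalIdeal.div_one, eq_comm, coeIdeal_eq_one, Ideal.one_eq_top]
  exact hI

namespace IsPrufer

theorem exists_add_eq_one (hR : IsPrufer R) (a : R) {b : R} (hb : b ≠ 0) :
    ∃ u v s t : R, u + v = 1 ∧ u * b = t * a ∧ v * a = s * b := by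
  set G : Ideal R := Ideal.span {a, b}
  have hG0 : (G : 𝓕) ≠ 0 := coeIdeal_ne_zero.mpr <|
    mt (Submodule.eq_bot_iff _).mp fun h => hb (h b (Ideal.subset_span (by simp)))
  have hGinv : (G : 𝓕) * (G : 𝓕)⁻¹ = 1 := (mul_inv_cancel_iff_isUnit K).mpr <|
    hR G (coeIdeal_ne_zero.mp hG0) (Submodule.fg_span (Set.toFinite _))
  have integral (y : K) (hy : y ∈ (G : 𝓕)⁻¹) (g : R) (hg : g ∈ G) :
      ∃ r : R, algebraMap R K r = y * algebraMap R K g :=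
    (mem_one_iff _).mp ((mem_inv_iff hG0).mp hy _ (mem_coeIdeal_of_mem _ hg))
  have h1 : (1 : K) ∈ (spanSingleton _ (algebraMap R K a) + spanSingleton _ (algebraMap R K b))
      * (G : 𝓕)⁻¹ := by
    rw [← coeIdeal_span_singleton, ← coeIdeal_span_singleton, ← coeIdeal_sup,
      ← Ideal.span_insert, hGinv]
    exact one_mem_one _
  rw [add_mul] at h1
  obtain ⟨_, hay, _, hbw, hyw⟩ := Submodule.mem_sup.mp h1
  obtain ⟨y, hy, rfl⟩ := mem_singleton_mul.mp hay
  obtain ⟨w, hw, rfl⟩ := mem_singleton_mul.mp hbw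
  have haG : a ∈ G := Ideal.subset_span (by simp)
  have hbG : b ∈ G := Ideal.subset_span (by simp)
  obtain ⟨u, hu⟩ := integral y hy a haG
  obtain ⟨t, ht⟩ := integral y hy b hbG
  obtain ⟨s, hs⟩ := integral w hw a haG
  obtain ⟨v, hv⟩ := integral w hw b hbG
  refine ⟨u, v, s, t, ?_, ?_, ?_⟩ <;> apply IsFractionRing.injective R K <;>
    simp only [map_add, map_mul, map_one, hu, hv, hs, ht]
  · linear_combination hyw
  · ring
  · ring

theorem le_of_lt_radical (hR : IsPrufer R) {P Q : Ideal R} (hP : P.IsPrime) (hQ : Q.IsPrimary)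
    (hPQ : P < Q.radical) : P ≤ Q := by
  obtain ⟨q, hqQ, hqP⟩ : ∃ q ∈ Q, q ∉ P :=
    Set.not_subset.mp fun h => hPQ.not_ge (hP.radical ▸ Ideal.radical_mono h)
  intro p hp
  obtain ⟨u, v, s, t, huv, huq, hvp⟩ :=
    hR.exists_add_eq_one p (b := q) fun h => hqP (h ▸ P.zero_mem)
  have hu : u ∈ Q.radical :=
    hPQ.le ((hP.mem_or_mem (huq ▸ P.mul_mem_left t hp)).resolve_right hqP)
  have hv : v ∉ Q.radical := fun hv =>
    (Ideal.isPrime_radical hQ).ne_top ((Ideal.eq_top_iff_one _).mpr (huv ▸ add_mem hu hv))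
  have hpv : p * v ∈ Q := by rw [mul_comm, hvp]; exact Q.mul_mem_left s hqQ
  exact ((Ideal.isPrimary_iff.mp hQ).2 hpv).resolve_right hv

theorem exists_mem_radical_forall_notMem (hR : IsPrufer R) {Q : Ideal R} (hQ : Q.IsPrimary)
    (hne : Q ≠ Q.radical) :
    ∃ x ∈ Q.radical, ∀ P : Ideal R, P.IsPrime → P < Q.radical → x ∉ P := by
  by_contra! h
  refine hne (le_antisymm Ideal.le_radical fun x hx => ?_)
  obtain ⟨P, hP, hPQ, hxP⟩ := h x hx
  exact hR.le_of_lt_radical hP hQ hPQ hxP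

theorem fg_colon_singleton (hR : IsPrufer R) (z : K) : ((1 : Submodule R K).colon {z}).FG := by
  obtain ⟨a, b, hb, rfl⟩ := IsFractionRing.div_surjective (A := R) z
  have hb0 : algebraMap R K b ≠ 0 := IsFractionRing.to_map_ne_zero_of_mem_nonZeroDivisors hb
  obtain ⟨u, v, s, t, huv, hub, hva⟩ := hR.exists_add_eq_one a (nonZeroDivisors.ne_zero hb)
  apply_fun algebraMap R K at huv hub hva
  simp only [map_add, map_mul, map_one] at huv hub hva
  -- `r u = t (r z)` for `r` in the conductor of `z`, so `r = t (r z) + v r`.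
  suffices (1 : Submodule R K).colon {algebraMap R K a / algebraMap R K b} = Ideal.span {t, v} from
    this ▸ Submodule.fg_span (Set.toFinite _)
  ext r
  simp only [Submodule.mem_colon_singleton, Submodule.mem_one, Algebra.smul_def,
    Ideal.mem_span_pair]
  constructor
  · rintro ⟨c, hc⟩
    refine ⟨c, r, IsFractionRing.injective R K (mul_right_cancel₀ hb0 ?_)⟩
    have hcb : algebraMap R K c * algebraMap R K b = algebraMap R K r * algebraMap R K a := by
      rw [hc]; field_simp
    simp only [map_add, map_mul]
    linear_combination algebraMap R K t * hcb - algebraMap R K r * hub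
      + algebraMap R K r * algebraMap R K b * huv
  · rintro ⟨c, d, rfl⟩
    refine ⟨c * u + d * s, ?_⟩
    field_simp
    simp only [map_add, map_mul]
    linear_combination algebraMap R K c * hub - algebraMap R K d * hva

theorem exists_isInvertibleIdeal_of_isSharp (hR : IsPrufer R) {M Q₀ : Ideal R} (hM : M.IsMaximal)
    (hQ₀ : Q₀.IsPrimary) (hr : Q₀.radical = M) (hne : Q₀ ≠ M) (hs : IsSharp R M) :
    ∃ Q : Ideal R, Q.IsPrimary ∧ Q.radical = M ∧ IsInvertibleIdeal R Q := by
  obtain ⟨x, hxM, hx⟩ := hR.exists_mem_radical_forall_notMem hQ₀ (hr ▸ hne)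
  rw [hr] at hxM hx
  obtain ⟨I, hIfg, hIM, hI⟩ := hs
  set Q := I ⊔ Ideal.span {x}
  have hrad : Q.radical = M := by
    refine le_antisymm ?_ ?_
    · exact hM.isPrime.radical ▸
        Ideal.radical_mono (sup_le hIM (Ideal.span_singleton_le_iff_mem _ |>.mpr hxM))
    rw [Ideal.radical_eq_sInf]
    refine le_sInf fun P ⟨hQP, hP⟩ => ?_
    obtain ⟨N, hN, hPN⟩ := Ideal.exists_le_maximal P hP.ne_top
    have hNM : N = M := (hM.eq_of_le hN.ne_top (hI N hN ((le_sup_left.trans hQP).trans hPN))).symm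
    by_contra hMP
    exact hx P hP (lt_of_le_of_ne (hNM ▸ hPN) fun h => hMP h.ge)
      (hQP (Ideal.mem_sup_right (Ideal.mem_span_singleton_self x)))
  have hMbot : M ≠ ⊥ := hr ▸ Ideal.radical_ne_bot_of_ne_radical (hr ▸ hne)
  refine ⟨Q, Ideal.isPrimary_of_isMaximal_radical (hrad ▸ hM), hrad, hR Q ?_ ?_⟩
  · exact Ideal.ne_bot_of_radical_ne_bot (hrad ▸ hMbot)
  · exact Submodule.FG.sup hIfg (Submodule.fg_span_singleton x)

theorem one_div_eq_one_of_not_isSharp (hR : IsPrufer R) {M Q : Ideal R} (hM : M.IsMaximal)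
    (hns : ¬ IsSharp R M) (hQ : Q ≠ ⊥) (hr : Q.radical = M) : 1 / (Q : 𝓕) = 1 := by
  have hQ0 : (Q : 𝓕) ≠ 0 := coeIdeal_ne_zero.mpr hQ
  refine le_antisymm (fun z hz => ?_)
    ((le_div_iff_mul_le hQ0).mpr ((one_mul (Q : 𝓕)).symm ▸ coeIdeal_le_one))
  by_contra hz1
  refine hns (isSharp_of_le_radical hM (hR.fg_colon_singleton z) ?_ (hr ▸ Ideal.radical_mono ?_))
  · intro htop
    have h1 : (1 : R) ∈ (1 : Submodule R K).colon {z} := htop ▸ Submodule.mem_top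
    rw [Submodule.mem_colon_singleton, one_smul, Submodule.mem_one] at h1
    exact hz1 ((mem_one_iff _).mpr h1)
  · intro q hq
    rw [Submodule.mem_colon_singleton, Algebra.smul_def, mul_comm, ← coe_one]
    exact (mem_div_iff_of_ne_zero hQ0).mp hz _ (mem_coeIdeal_of_mem _ hq)

end IsPrufer

end Domain

theorem not_sharp_iff_no_divisorial_primary_general (R : Type*) [CommRing R] [IsDomain R]
    (hR : IsPrufer R) (M : Ideal R) (hM : M.IsMaximal)
    (hbr : ∃ Q : Ideal R, Q.IsPrimary ∧ Q.radical = M ∧ Q ≠ M) :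
    ((¬ IsSharp R M) ↔
      ∀ Q : Ideal R, Q.IsPrimary → Q.radical = M → ¬ IsDivisorial R Q) ∧
    ((¬ IsSharp R M) ↔
      ∀ Q : Ideal R, Q.IsPrimary → Q.radical = M →
        (1 / (Q : FractionalIdeal (nonZeroDivisors R) (FractionRing R)) = 1)) := by
  obtain ⟨Q₀, hQ₀, hr₀, hne₀⟩ := hbr
  have hMbot : M ≠ ⊥ := hr₀ ▸ Ideal.radical_ne_bot_of_ne_radical (hr₀ ▸ hne₀)
  have one_div_eq_one (hns : ¬ IsSharp R M) (Q : Ideal R) (hr : Q.radical = M) :=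
    hR.one_div_eq_one_of_not_isSharp hM hns (Ideal.ne_bot_of_radical_ne_bot (hr ▸ hMbot)) hr
  have exists_divisorial (hs : IsSharp R M) : ∃ Q : Ideal R, Q.IsPrimary ∧ Q.radical = M ∧
      IsDivisorial R Q ∧ 1 / (Q : FractionalIdeal (nonZeroDivisors R) (FractionRing R)) ≠ 1 :=
    let ⟨Q, hQ, hr, hinv⟩ := hR.exists_isInvertibleIdeal_of_isSharp hM hQ₀ hr₀ hne₀ hs
    ⟨Q, hQ, hr, hinv.isDivisorial, hinv.one_div_ne_one hQ.ne_top⟩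
  refine ⟨⟨fun hns Q hQ hr => ?_, fun h hs => ?_⟩,
    ⟨fun hns Q _ hr => one_div_eq_one hns Q hr, fun h hs => ?_⟩⟩
  · exact not_isDivisorial_of_one_div_eq_one hQ.ne_top (one_div_eq_one hns Q hr)
  · obtain ⟨Q, hQ, hr, hdiv, -⟩ := exists_divisorial hs
    exact h Q hQ hr hdiv
  · obtain ⟨Q, hQ, hr, -, hne⟩ := exists_divisorial hs
    exact hne (h Q hQ hr)

/-- For a branched nondivisorial maximal ideal `M` of a Prüfer domain: `M` is not sharp
iff no `M`-primary ideal is divisorial, iff `(R:Q) = R` for every `M`-primary ideal `Q`. -/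
theorem not_sharp_iff_no_divisorial_primary (R : Type*) [CommRing R] [IsDomain R]
    (hR : IsPrufer R) (M : Ideal R) (hM : M.IsMaximal)
    (hbr : ∃ Q : Ideal R, Q.IsPrimary ∧ Q.radical = M ∧ Q ≠ M)
    (hnd : ¬ IsDivisorial R M) :
    ((¬ IsSharp R M) ↔
      ∀ Q : Ideal R, Q.IsPrimary → Q.radical = M → ¬ IsDivisorial R Q) ∧
    ((¬ IsSharp R M) ↔
      ∀ Q : Ideal R, Q.IsPrimary → Q.radical = M →
        (1 / (Q : FractionalIdeal (nonZeroDivisors R) (FractionRing R)) = 1)) :=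
  not_sharp_iff_no_divisorial_primary_general R hR M hM hbr
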